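/- arXiv:2006.07463 — 2 statements merged into one kernel-verified Lean document; each statement's English description precedes it below -/
import Mathlib

section
/- Let m ≥ 1, let F be the (m+1)×(m+1) real block matrix with scalar top-left entry f, top-right row vector b ∈ ℝ^m, bottom-left column vector c ∈ ℝ^m, and bottom-right m×m block D, and let γ ∈ ℝ. Then adj(F − γ·E₀₀) = adj(F) − γ·G, where G is the block matrix with zero top-left scalar, zero top-right row, zero bottom-left column, and bottom-right block adj(D). In particular the first row and first column of the adjugate are unchanged by the perturbation. -/
/-!
Each entry of the adjugate is a determinant `adj(A) i j = det (A.updateRow j eᵢ)`. If `j = 0` the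
perturbed row is overwritten, so column `0` of the adjugate is unchanged. If `j ≠ 0`, linearity of
the determinant in row `0` splits off `-γ` times the determinant of a matrix whose row `0` is `e₀`;
that determinant is the one of the lower-right block, `D` with row `j` replaced by `eᵢ`, which is
`adj(D) i j` for `i ≠ 0` and `0` for `i = 0`.
-/

open Matrix

namespace Matrix

variable {n R : Type*} [DecidableEq n] [CommRing R]

section single

variable (A : Matrix n n R) (k : n) (t : R)

theorem updateRow_add_smul_single_self (v : n → R) :
    (A + t • single k k 1).updateRow k v = A.updateRow k v := by
  ext i j
  by_cases hi : i = k
  · simp [hi]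
  · simp [hi, Ne.symm hi]

theorem updateRow_add_smul_single_of_ne {j : n} (hj : j ≠ k) (v : n → R) :
    (A + t • single k k 1).updateRow j v = A.updateRow j v + t • single k k 1 := by
  ext i l
  by_cases hi : i = j
  · simp [hi, single_apply]
    grind
  · simp [hi]

variable [Fintype n]

theorem det_add_smul_single_self :
    det (A + t • single k k 1) = det A + t * det (A.updateRow k (Pi.single k 1)) := by
  have hrow : A + t • single k k 1 = A.updateRow k (A k + t • Pi.single k 1) := by
    ext i j
    by_cases hi : i = k
    · subst hi; simp [single_apply, Pi.single_apply, eq_comm]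
    · simp [hi, Ne.symm hi]
  rw [hrow, det_updateRow_add, det_updateRow_smul, updateRow_eq_self]

theorem adjugate_add_smul_single_self_apply (i j : n) :
    (A + t • single k k 1).adjugate i j = A.adjugate i j +
      if j = k then 0
      else t * det ((A.updateRow j (Pi.single i 1)).updateRow k (Pi.single k 1)) := by
  rw [adjugate_apply, adjugate_apply]
  split_ifs with hj
  · rw [hj, updateRow_add_smul_single_self, add_zero]
  · rw [updateRow_add_smul_single_of_ne _ _ _ hj, det_add_smul_single_self]

end single

theorem toBlocks₂₂_updateRow_inr {α : Type*} (M : Matrix (Fin 1 ⊕ n) (Fin 1 ⊕ n) α) (j : n)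
    (v : Fin 1 ⊕ n → α) :
    (M.updateRow (Sum.inr j) v).toBlocks₂₂ = M.toBlocks₂₂.updateRow j (v ∘ Sum.inr) := by
  ext i l
  by_cases hi : i = j <;> simp [toBlocks₂₂, hi]

variable [Fintype n] (M : Matrix (Fin 1 ⊕ n) (Fin 1 ⊕ n) R)

theorem det_updateRow_inl_single :
    det (M.updateRow (Sum.inl 0) (Pi.single (Sum.inl 0) 1)) = det M.toBlocks₂₂ := by
  rw [← fromBlocks_toBlocks (M.updateRow _ _)]
  have h₁₁ : (M.updateRow (Sum.inl 0) (Pi.single (Sum.inl 0) 1)).toBlocks₁₁ = 1 := by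
    ext i j; simp [toBlocks₁₁, Subsingleton.elim i 0, Subsingleton.elim j 0, one_apply]
  have h₁₂ : (M.updateRow (Sum.inl 0) (Pi.single (Sum.inl 0) 1)).toBlocks₁₂ = 0 := by
    ext i j; simp [toBlocks₁₂, Subsingleton.elim i 0]
  rw [h₁₁, h₁₂, det_fromBlocks_zero₁₂, det_one, one_mul]
  congr 1

theorem adjugate_add_smul_single_inl (t : R) :
    (M + t • single (Sum.inl 0) (Sum.inl 0) 1).adjugate =
      M.adjugate + t • fromBlocks 0 0 0 M.toBlocks₂₂.adjugate := by
  ext i (j | j)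
  · rw [Subsingleton.elim j 0, adjugate_add_smul_single_self_apply, if_pos rfl]
    rcases i with i | i <;> simp
  · rw [adjugate_add_smul_single_self_apply, if_neg Sum.inr_ne_inl, det_updateRow_inl_single,
      toBlocks₂₂_updateRow_inr]
    rcases i with i | i
    · have hzero : (Pi.single (Sum.inl i : Fin 1 ⊕ n) (1 : R) ∘ Sum.inr) = 0 := by
        funext l; simp
      simp [hzero, det_eq_zero_of_row_eq_zero j]
    · have hsingle : (Pi.single (Sum.inr i : Fin 1 ⊕ n) (1 : R) ∘ Sum.inr) = Pi.single i 1 := by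
        funext l; simp [Pi.single_apply]
      simp [hsingle, adjugate_apply]

end Matrix

theorem adjugate_perturbed_topLeft_general (m : ℕ) (f : ℝ)
    (b : Matrix (Fin 1) (Fin m) ℝ) (c : Matrix (Fin m) (Fin 1) ℝ)
    (D : Matrix (Fin m) (Fin m) ℝ) (γ : ℝ)
    (F : Matrix (Fin 1 ⊕ Fin m) (Fin 1 ⊕ Fin m) ℝ)
    (hF : F = Matrix.fromBlocks (Matrix.of fun _ _ => f) b c D) :
    (F - γ • Matrix.single (Sum.inl 0) (Sum.inl 0) (1 : ℝ)).adjugate =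
      F.adjugate - γ • Matrix.fromBlocks 0 0 0 D.adjugate := by
  rw [sub_eq_add_neg, ← neg_smul, adjugate_add_smul_single_inl, hF, toBlocks_fromBlocks₂₂,
    neg_smul, ← sub_eq_add_neg]

/-- Perturbing the top-left scalar entry of the block matrix
`F = fromBlocks f b c D` by `-γ` changes the adjugate by `-γ • fromBlocks 0 0 0 (adj D)`;
in particular the first row and first column of the adjugate are unchanged. -/
theorem adjugate_perturbed_topLeft (m : ℕ) (hm : 1 ≤ m) (f : ℝ)
    (b : Matrix (Fin 1) (Fin m) ℝ) (c : Matrix (Fin m) (Fin 1) ℝ)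
    (D : Matrix (Fin m) (Fin m) ℝ) (γ : ℝ)
    (F : Matrix (Fin 1 ⊕ Fin m) (Fin 1 ⊕ Fin m) ℝ)
    (hF : F = Matrix.fromBlocks (Matrix.of fun _ _ => f) b c D) :
    (F - γ • Matrix.single (Sum.inl 0) (Sum.inl 0) (1 : ℝ)).adjugate =
      F.adjugate - γ • Matrix.fromBlocks 0 0 0 D.adjugate :=
  adjugate_perturbed_topLeft_general m f b c D γ F hF
end

section
/- Let G : ℝ → ℝ be positive and nonincreasing on [0, ∞) and long-tailed in the sense that for every fixed y ≥ 0, G(u − y)/G(u) → 1 as u → ∞. Let φ : ℝ → ℝ be nondecreasing with φ(u) → ∞ as u → ∞ and 0 ≤ φ(u) ≤ u for all large u, and suppose G is φ-insensitive: G(u − φ(u))/G(u) → 1 as u → ∞. Let ζ : [0, ∞) → ℝ be nonnegative and Lebesgue integrable, and suppose (∫_{φ(u)}^∞ ζ(y) dy) / G(u) → 0 as u → ∞. Then lim_{u→∞} (∫_0^u G(u − y)·ζ(y) dy) / G(u) = ∫_0^∞ ζ(y) dy < ∞. -/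
/-!
Squeeze. Since `G` is nonincreasing, `G (u - y) ≥ G u` for `y ∈ [0, u]`, so the ratio is at
least `∫_0^u ζ`. Splitting `[0, u]` at `φ u`, the integrand is at most `G (u - φ u) ζ y` on
`[0, φ u]` and `G 0 ζ y` beyond, so the ratio is at most
`G (u - φ u) / G u * ∫_0^{φ u} ζ + G 0 * (∫_{φ u}^∞ ζ) / G u`, which tends to `∫_0^∞ ζ` by
`φ`-insensitivity and the tail condition.
-/

open Filter MeasureTheory Set Topology

section ConvolutionBounds

variable {G ζ : ℝ → ℝ} {a u : ℝ}

theorem integrableOn_Icc_comp_sub_mul (hG : AntitoneOn G (Ici 0))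
    (hζ : IntegrableOn ζ (Icc 0 u)) :
    IntegrableOn (fun y => G (u - y) * ζ y) (Icc 0 u) := by
  have hmono : MonotoneOn (fun y => G (u - y)) (Icc 0 u) := fun x hx y hy hxy =>
    hG (by simp [hy.2]) (by simp [hx.2]) (by linarith)
  exact hζ.mul_of_top_right (hmono.memLp_isCompact isCompact_Icc)

theorem mul_setIntegral_Icc_le_setIntegral_Icc_comp_sub_mul (hG : AntitoneOn G (Ici 0))
    (hζ0 : ∀ y ∈ Icc 0 u, 0 ≤ ζ y) (hζ : IntegrableOn ζ (Icc 0 u)) :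
    G u * ∫ y in Icc 0 u, ζ y ≤ ∫ y in Icc 0 u, G (u - y) * ζ y := by
  rw [← integral_const_mul]
  refine setIntegral_mono_on (hζ.const_mul _) (integrableOn_Icc_comp_sub_mul hG hζ)
    measurableSet_Icc fun y hy => mul_le_mul_of_nonneg_right ?_ (hζ0 y hy)
  exact hG (by simp [hy.2]) (by simp [hy.1.trans hy.2]) (by linarith [hy.1])

theorem setIntegral_Icc_comp_sub_mul_le (hG : AntitoneOn G (Ici 0)) (hG0 : 0 ≤ G 0)
    (ha : 0 ≤ a) (hau : a ≤ u) (hζ0 : ∀ y, 0 ≤ y → 0 ≤ ζ y) (hζ : IntegrableOn ζ (Ici 0)) :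
    ∫ y in Icc 0 u, G (u - y) * ζ y ≤
      G (u - a) * (∫ y in Icc 0 a, ζ y) + G 0 * ∫ y in Ioi a, ζ y := by
  have hint := integrableOn_Icc_comp_sub_mul (u := u) hG (hζ.mono_set Icc_subset_Ici_self)
  have hint₁ := hint.mono_set (Icc_subset_Icc_right hau)
  have hint₂ := hint.mono_set (Ioc_subset_Icc_self.trans (Icc_subset_Icc_left ha))
  have hζIoi : IntegrableOn ζ (Ioi a) := hζ.mono_set fun y hy => ha.trans hy.le
  rw [← Icc_union_Ioc_eq_Icc ha hau, setIntegral_union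
    ((Iic_disjoint_Ioc le_rfl).mono_left Icc_subset_Iic_self) measurableSet_Ioc
    hint₁ hint₂]
  gcongr
  · rw [← integral_const_mul]
    refine setIntegral_mono_on hint₁ ((hζ.mono_set Icc_subset_Ici_self).const_mul _)
      measurableSet_Icc fun y hy => mul_le_mul_of_nonneg_right ?_ (hζ0 y hy.1)
    exact hG (by simp [hau]) (by simp [hy.2.trans hau]) (by linarith [hy.2])
  · calc ∫ y in Ioc a u, G (u - y) * ζ y
        ≤ ∫ y in Ioc a u, G 0 * ζ y := by
          refine setIntegral_mono_on hint₂ ((hζIoi.mono_set Ioc_subset_Ioi_self).const_mul _)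
            measurableSet_Ioc fun y hy => mul_le_mul_of_nonneg_right ?_ (hζ0 y (ha.trans hy.1.le))
          exact hG (le_refl (0 : ℝ)) (by simp [hy.2]) (by linarith [hy.1, hy.2])
      _ ≤ G 0 * ∫ y in Ioi a, ζ y := by
          rw [integral_const_mul]
          gcongr
          · exact (ae_restrict_mem measurableSet_Ioi).mono fun y hy => hζ0 y (ha.trans hy.le)
          · exact Ioc_subset_Ioi_self

end ConvolutionBounds

theorem tendsto_setIntegral_Icc_zero_atTop {ζ : ℝ → ℝ} (hζ : IntegrableOn ζ (Ioi 0)) :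
    Tendsto (fun t => ∫ y in Icc 0 t, ζ y) atTop (𝓝 (∫ y in Ioi 0, ζ y)) := by
  refine (intervalIntegral_tendsto_integral_Ioi 0 hζ tendsto_id).congr' ?_
  filter_upwards [eventually_ge_atTop 0] with t ht
  rw [id, intervalIntegral.integral_of_le ht, integral_Icc_eq_integral_Ioc]

theorem heavy_tail_convolution_limit_general (G φ ζ : ℝ → ℝ)
    (hGpos : ∀ u : ℝ, 0 ≤ u → 0 < G u)
    (hGanti : ∀ u v : ℝ, 0 ≤ u → u ≤ v → G v ≤ G u)
    (hφtop : Tendsto φ atTop atTop)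
    (hφbound : ∀ᶠ u in atTop, 0 ≤ φ u ∧ φ u ≤ u)
    (hins : Tendsto (fun u : ℝ => G (u - φ u) / G u) atTop (nhds 1))
    (hζnonneg : ∀ y : ℝ, 0 ≤ y → 0 ≤ ζ y)
    (hζint : IntegrableOn ζ (Set.Ici 0))
    (htail : Tendsto (fun u : ℝ => (∫ y in Set.Ioi (φ u), ζ y) / G u) atTop (nhds 0)) :
    Tendsto (fun u : ℝ => (∫ y in Set.Icc (0 : ℝ) u, G (u - y) * ζ y) / G u) atTop
      (nhds (∫ y in Set.Ioi (0 : ℝ), ζ y)) := by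
  have hG : AntitoneOn G (Ici 0) := fun u hu _ _ huv => hGanti u _ hu huv
  have hlower := tendsto_setIntegral_Icc_zero_atTop (hζint.mono_set Ioi_subset_Ici_self)
  have hupper : Tendsto (fun u => G (u - φ u) / G u * (∫ y in Icc 0 (φ u), ζ y) +
      G 0 * ((∫ y in Ioi (φ u), ζ y) / G u)) atTop (𝓝 (∫ y in Ioi 0, ζ y)) := by
    simpa using (hins.mul (hlower.comp hφtop)).add (tendsto_const_nhds.mul htail)
  refine tendsto_of_tendsto_of_tendsto_of_le_of_le' hlower hupper ?_ ?_
  · filter_upwards [eventually_ge_atTop 0] with u hu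
    rw [le_div_iff₀ (hGpos u hu), mul_comm]
    exact mul_setIntegral_Icc_le_setIntegral_Icc_comp_sub_mul hG
      (fun y hy => hζnonneg y hy.1) (hζint.mono_set Icc_subset_Ici_self)
  · filter_upwards [hφbound] with u ⟨hφ0, hφu⟩
    calc (∫ y in Icc 0 u, G (u - y) * ζ y) / G u
        ≤ (G (u - φ u) * (∫ y in Icc 0 (φ u), ζ y) + G 0 * ∫ y in Ioi (φ u), ζ y) / G u := by
          gcongr
          · exact (hGpos u (hφ0.trans hφu)).le
          · exact setIntegral_Icc_comp_sub_mul_le hG (hGpos 0 le_rfl).le hφ0 hφu hζnonneg hζint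
      _ = _ := by ring

/-- Long-tailed insensitivity lemma: if `G` is positive, nonincreasing on `[0,∞)` and
long-tailed, `φ` is a nondecreasing function tending to infinity with `0 ≤ φ u ≤ u`
eventually, `G` is `φ`-insensitive, `ζ` is nonnegative and integrable on `[0,∞)` with
`(∫_{φ u}^∞ ζ) / G u → 0`, then `(∫_0^u G(u - y) ζ(y) dy) / G u → ∫_0^∞ ζ`. -/
theorem heavy_tail_convolution_limit (G φ ζ : ℝ → ℝ)
    (hGpos : ∀ u : ℝ, 0 ≤ u → 0 < G u)
    (hGanti : ∀ u v : ℝ, 0 ≤ u → u ≤ v → G v ≤ G u)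
    (hGlong : ∀ y : ℝ, 0 ≤ y →
      Tendsto (fun u : ℝ => G (u - y) / G u) atTop (nhds 1))
    (hφmono : Monotone φ)
    (hφtop : Tendsto φ atTop atTop)
    (hφbound : ∀ᶠ u in atTop, 0 ≤ φ u ∧ φ u ≤ u)
    (hins : Tendsto (fun u : ℝ => G (u - φ u) / G u) atTop (nhds 1))
    (hζnonneg : ∀ y : ℝ, 0 ≤ y → 0 ≤ ζ y)
    (hζint : IntegrableOn ζ (Set.Ici 0))
    (htail : Tendsto (fun u : ℝ => (∫ y in Set.Ioi (φ u), ζ y) / G u) atTop (nhds 0)) :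
    Tendsto (fun u : ℝ => (∫ y in Set.Icc (0 : ℝ) u, G (u - y) * ζ y) / G u) atTop
      (nhds (∫ y in Set.Ioi (0 : ℝ), ζ y)) :=
  heavy_tail_convolution_limit_general G φ ζ hGpos hGanti hφtop hφbound hins hζnonneg hζint htail
end
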